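/- arXiv:1909.13796 — 2 statements merged into one kernel-verified Lean document; each statement's English description precedes it below -/
import Mathlib

section
/- Let M be a trilinear form on the 2-dimensional real inner product space EuclideanSpace ℝ (Fin 2) with standard orthonormal basis (e₁, e₂), and suppose M is symmetric in its last two arguments (M(a,b,c) = M(a,c,b) for all a,b,c) and traceless in its last two arguments (Σᵢ M(a,eᵢ,eᵢ) = 0 for all a). Then M is symmetric in its first two arguments (M(a,b,c) = M(b,a,c) for all a,b,c) if and only if its trace over the first two arguments vanishes (Σᵢ M(eᵢ,eᵢ,c) = 0 for all c). [This is the pointwise algebraic core of the paper's Theorem 1: for a symmetric traceless 2-tensor N on a 2-dimensional surface, the Codazzi condition D_{[A}N_{B]C} = 0 is equivalent to the divergence-free condition D_A N^A{}_B = 0.] -/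
open Finset

/-- The standard orthonormal basis vectors of `EuclideanSpace ℝ (Fin 2)`. -/
noncomputable def stdBasis2 (i : Fin 2) : EuclideanSpace ℝ (Fin 2) :=
  EuclideanSpace.single i (1 : ℝ)

/-!
In dimension two a trilinear form `A` alternating in its first two slots is
`A(a, b, c) = det(a, b) λ(c)`, and its contraction `∑ᵢ A(eᵢ, b, eᵢ)` is `λ` rotated by a right
angle, so it vanishes only if `A = 0`. Applied to `A(a, b, c) = M(a, b, c) - M(b, a, c)`: `M` is
symmetric in its first two slots iff its contractions of slot 3 against slot 1 and against
slot 2 agree. When `M` is symmetric in its last two slots these contractions are the divergence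
and the trace of `M`, and the trace vanishes.
-/

namespace LinearMap

variable {R V N : Type*} [CommSemiring R] [AddCommMonoid V] [Module R V] [AddCommMonoid N]
  [IsCancelAdd N] [Module R N]

theorem flip_eq_self_iff_sum_apply_self_eq (v : Module.Basis (Fin 2) R V)
    (M : V →ₗ[R] V →ₗ[R] V →ₗ[R] N) :
    M.flip = M ↔ ∀ b, ∑ i, M (v i) b (v i) = ∑ i, M b (v i) (v i) := by
  refine ⟨fun h b => sum_congr rfl fun i _ => (DFunLike.congr_fun (congr_fun₂ h (v i) b) (v i)).symm, fun h => ?_⟩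
  have h01 (k : Fin 2) : M (v 0) (v 1) (v k) = M (v 1) (v 0) (v k) := by
    fin_cases k
    · simpa [Fin.sum_univ_two] using h (v 1)
    · simpa [Fin.sum_univ_two] using (h (v 0)).symm
  refine v.ext fun i => v.ext fun j => v.ext fun k => ?_
  fin_cases i <;> fin_cases j <;> simp [h01]

end LinearMap

/-- For a trilinear form `M` on the 2-dimensional real inner product space
`EuclideanSpace ℝ (Fin 2)` which is symmetric and traceless in its last two
arguments, `M` is symmetric in its first two arguments if and only if its trace
over the first two arguments vanishes. -/
theorem codazzi_iff_divergence_free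
    (M : EuclideanSpace ℝ (Fin 2) →ₗ[ℝ] EuclideanSpace ℝ (Fin 2) →ₗ[ℝ]
          EuclideanSpace ℝ (Fin 2) →ₗ[ℝ] ℝ)
    (hsym : ∀ a b c, M a b c = M a c b)
    (htr : ∀ a, ∑ i : Fin 2, M a (stdBasis2 i) (stdBasis2 i) = 0) :
    (∀ a b c, M a b c = M b a c) ↔
      (∀ c, ∑ i : Fin 2, M (stdBasis2 i) (stdBasis2 i) c = 0) := by
  have hbasis : ⇑(EuclideanSpace.basisFun (Fin 2) ℝ).toBasis = stdBasis2 := by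
    ext1 i
    simp [stdBasis2]
  have hflip : M.flip = M ↔ ∀ a b c, M a b c = M b a c := by
    simp only [LinearMap.ext_iff, LinearMap.flip_apply, eq_comm]
  rw [← hflip, LinearMap.flip_eq_self_iff_sum_apply_self_eq (EuclideanSpace.basisFun _ ℝ).toBasis,
    hbasis]
  simp only [hsym (stdBasis2 _), htr]
end

section
/- Let M be a trilinear form on the 2-dimensional real inner product space EuclideanSpace ℝ (Fin 2) with standard orthonormal basis (e₁, e₂), and suppose M is symmetric in its last two arguments (M(a,b,c) = M(a,c,b) for all a,b,c) and traceless in its last two arguments (Σᵢ M(a,eᵢ,eᵢ) = 0 for all a). Then Σ_{i,j,k} (M(eᵢ,eⱼ,e_k) − M(eⱼ,eᵢ,e_k))² = 2 Σ_k (Σᵢ M(eᵢ,eᵢ,e_k))². [This is the pointwise algebraic identity behind the paper's equation (12), equating the two expressions 4 D^{[M}N^{N]C} D_{[M}N_{N]C} and 2 D_C N^{C}{}_A D_B N^{BA} for the radiant quantity 𝒵 built from a symmetric traceless 2-tensor N on a 2-dimensional surface.] -/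
/-!
Put `w k := M(e₀,e₁,e_k) − M(e₁,e₀,e_k)`. Only the pairs `i ≠ j` contribute to the left-hand side,
which is therefore `2 |w|²`. Symmetry and tracelessness in the last two slots show that the
divergence `D k := Σᵢ M(eᵢ,eᵢ,e_k)` is `w` rotated by a right angle, `(D 0, D 1) = (-w 1, w 0)`,
so `|D|² = |w|²`.
-/

open Finset

section ComponentArray

variable {T : Fin 2 → Fin 2 → Fin 2 → ℝ}

theorem sum_sq_sub_swap_eq :
    ∑ i, ∑ j, ∑ k, (T i j k - T j i k) ^ 2 = 2 * ∑ k, (T 0 1 k - T 1 0 k) ^ 2 := by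
  simp only [Fin.sum_univ_two]
  ring

theorem sum_diag_zero_eq (hsym : ∀ i j k, T i j k = T i k j) (htr : ∀ i, ∑ j, T i j j = 0) :
    ∑ i, T i i 0 = -(T 0 1 1 - T 1 0 1) := by
  have htr₀ := htr 0
  simp only [Fin.sum_univ_two] at htr₀ ⊢
  linear_combination htr₀ + hsym 1 1 0

theorem sum_diag_one_eq (hsym : ∀ i j k, T i j k = T i k j) (htr : ∀ i, ∑ j, T i j j = 0) :
    ∑ i, T i i 1 = T 0 1 0 - T 1 0 0 := by
  have htr₁ := htr 1
  simp only [Fin.sum_univ_two] at htr₁ ⊢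
  linear_combination hsym 0 0 1 + htr₁

theorem sum_sq_sub_swap_eq_two_mul_sum_sq_sum_diag (hsym : ∀ i j k, T i j k = T i k j)
    (htr : ∀ i, ∑ j, T i j j = 0) :
    ∑ i, ∑ j, ∑ k, (T i j k - T j i k) ^ 2 = 2 * ∑ k, (∑ i, T i i k) ^ 2 := by
  rw [sum_sq_sub_swap_eq, Fin.sum_univ_two (fun k => (∑ i, T i i k) ^ 2),
    sum_diag_zero_eq hsym htr, sum_diag_one_eq hsym htr, Fin.sum_univ_two]
  ring

end ComponentArray

/-- For a trilinear form `M` on the 2-dimensional real inner product space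
`EuclideanSpace ℝ (Fin 2)` which is symmetric and traceless in its last two
arguments, the squared antisymmetrisation over the first two indices equals
twice the squared divergence:
`Σ_{i,j,k} (M(eᵢ,eⱼ,e_k) − M(eⱼ,eᵢ,e_k))² = 2 Σ_k (Σᵢ M(eᵢ,eᵢ,e_k))²`. -/
theorem radiant_Z_identity
    (M : EuclideanSpace ℝ (Fin 2) →ₗ[ℝ] EuclideanSpace ℝ (Fin 2) →ₗ[ℝ]
          EuclideanSpace ℝ (Fin 2) →ₗ[ℝ] ℝ)
    (hsym : ∀ a b c, M a b c = M a c b)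
    (htr : ∀ a, ∑ i : Fin 2, M a (stdBasis2 i) (stdBasis2 i) = 0) :
    ∑ i : Fin 2, ∑ j : Fin 2, ∑ k : Fin 2,
        (M (stdBasis2 i) (stdBasis2 j) (stdBasis2 k)
          - M (stdBasis2 j) (stdBasis2 i) (stdBasis2 k)) ^ 2
      = 2 * ∑ k : Fin 2,
          (∑ i : Fin 2, M (stdBasis2 i) (stdBasis2 i) (stdBasis2 k)) ^ 2 :=
  sum_sq_sub_swap_eq_two_mul_sum_sq_sum_diag
    (T := fun i j k => M (stdBasis2 i) (stdBasis2 j) (stdBasis2 k))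
    (fun _ _ _ => hsym _ _ _) (fun _ => htr _)
end
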